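/- arXiv:2108.06970 — 6 statements merged into one kernel-verified Lean document; each statement's English description precedes it below -/
import Mathlib

section
/- The set of all isometry classes of doubling compact metric spaces is an F_σ subset of the Gromov–Hausdorff space (𝓜, d_GH); that is, it is a countable union of closed subsets. -/
open GromovHausdorff

/-- A metric space is doubling: there is `N` such that every closed ball of radius `r`
is covered by at most `N` closed balls of radius `r / 2`. -/
def IsDoublingSpace (X : Type*) [MetricSpace X] : Prop :=
  ∃ N : ℕ, ∀ x : X, ∀ r : ℝ, 0 < r →
    ∃ F : Finset X, F.card ≤ N ∧
      Metric.closedBall x r ⊆ ⋃ y ∈ F, Metric.closedBall y (r / 2)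

/-- The quantitative finite-subset doubling condition: every `α`-separated finite subset of
diameter at most `d` (with at least two points) has cardinality at most `C * (d/α)^β`. -/
def SepBound (C β : ℕ) (X : Type*) [MetricSpace X] : Prop :=
  ∀ (A : Finset X) (α d : ℝ), 0 < α →
    (∀ x ∈ A, ∀ y ∈ A, x ≠ y → α ≤ dist x y) →
    (∀ x ∈ A, ∀ y ∈ A, dist x y ≤ d) →
    2 ≤ A.card → (A.card : ℝ) ≤ (C : ℝ) * (d / α) ^ β

lemma sepBound_mono {C β C' β' : ℕ} {X : Type*} [MetricSpace X]
    (h : SepBound C β X) (hC : C ≤ C') (hβ : β ≤ β') : SepBound C' β' X := by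
  intro A α d hα hsep hdiam hcard
  obtain ⟨x, hx, y, hy, hxy⟩ := Finset.one_lt_card.1 hcard
  have h1 : α ≤ dist x y := hsep x hx y hy hxy
  have h2 : dist x y ≤ d := hdiam x hx y hy
  have hd : α ≤ d := h1.trans h2
  have hone : (1 : ℝ) ≤ d / α := (one_le_div hα).2 hd
  calc (A.card : ℝ) ≤ (C : ℝ) * (d / α) ^ β := h A α d hα hsep hdiam hcard
    _ ≤ (C' : ℝ) * (d / α) ^ β' := by
        apply mul_le_mul (Nat.cast_le.2 hC) (pow_le_pow_right₀ hone hβ)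
          (by positivity) (by positivity)

/-- Iterated covering: in an `N`-doubling space, every ball of radius `r` is covered by
`N^k` balls of radius `r / 2^k`. -/
lemma cover_iter {X : Type*} [MetricSpace X] {N : ℕ}
    (hN : ∀ x : X, ∀ r : ℝ, 0 < r → ∃ F : Finset X, F.card ≤ N ∧
      Metric.closedBall x r ⊆ ⋃ y ∈ F, Metric.closedBall y (r / 2)) :
    ∀ (k : ℕ) (x : X) (r : ℝ), 0 < r → ∃ F : Finset X, F.card ≤ N ^ k ∧
      Metric.closedBall x r ⊆ ⋃ y ∈ F, Metric.closedBall y (r / 2 ^ k) := by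
  classical
  intro k
  induction k with
  | zero =>
    intro x r hr
    exact ⟨{x}, by simp, by simp⟩
  | succ k ih =>
    intro x r hr
    obtain ⟨F, hFc, hFs⟩ := ih x r hr
    have key : ∀ y : X, ∃ G : Finset X, G.card ≤ N ∧
        Metric.closedBall y (r / 2 ^ k) ⊆ ⋃ z ∈ G, Metric.closedBall z (r / 2 ^ (k + 1)) := by
      intro y
      obtain ⟨G, h1, h2⟩ := hN y (r / 2 ^ k) (by positivity)
      refine ⟨G, h1, ?_⟩
      have : r / 2 ^ k / 2 = r / 2 ^ (k + 1) := by
        rw [div_div, pow_succ]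
      rwa [this] at h2
    choose G hGc hGs using key
    refine ⟨F.biUnion G, ?_, ?_⟩
    · calc (F.biUnion G).card ≤ ∑ y ∈ F, (G y).card := Finset.card_biUnion_le
        _ ≤ ∑ _y ∈ F, N := Finset.sum_le_sum fun y _ => hGc y
        _ = F.card * N := by rw [Finset.sum_const, smul_eq_mul]
        _ ≤ N ^ k * N := Nat.mul_le_mul_right _ hFc
        _ = N ^ (k + 1) := (pow_succ N k).symm
    · intro z hz
      obtain ⟨y, hy, hzy⟩ := Set.mem_iUnion₂.1 (hFs hz)
      obtain ⟨w, hw, hzw⟩ := Set.mem_iUnion₂.1 (hGs y hzy)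
      exact Set.mem_iUnion₂.2 ⟨w, Finset.mem_biUnion.2 ⟨y, hy, hw⟩, hzw⟩

/-- A separated set covered by few small balls is small. -/
lemma card_le_of_sep {X : Type*} [MetricSpace X] {A F : Finset X} {α ρ : ℝ}
    (hsep : ∀ a ∈ A, ∀ b ∈ A, a ≠ b → α ≤ dist a b)
    (hcov : (A : Set X) ⊆ ⋃ y ∈ F, Metric.closedBall y ρ)
    (hρ : 2 * ρ < α) : A.card ≤ F.card := by
  have key : ∀ a : X, ∃ y : X, a ∈ A → y ∈ F ∧ a ∈ Metric.closedBall y ρ := by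
    intro a
    by_cases ha : a ∈ A
    · obtain ⟨y, hy, hay⟩ := Set.mem_iUnion₂.1 (hcov ha)
      exact ⟨y, fun _ => ⟨hy, hay⟩⟩
    · exact ⟨a, fun h => absurd h ha⟩
  choose f hf using key
  apply Finset.card_le_card_of_injOn f (fun a ha => (hf a ha).1)
  intro a ha b hb hab
  by_contra hne
  have h1 : dist a (f a) ≤ ρ := Metric.mem_closedBall.1 (hf a ha).2
  have h2 : dist b (f b) ≤ ρ := Metric.mem_closedBall.1 (hf b hb).2
  have h3 : α ≤ dist a b := hsep a ha b hb hne
  have h4 : dist a b ≤ dist a (f a) + dist (f b) b := by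
    rw [hab]; exact dist_triangle a (f b) b
  rw [dist_comm (f b) b] at h4
  linarith

/-- Ball-doubling implies the finite-subset bound. -/
lemma sepBound_of_doubling {X : Type*} [MetricSpace X] (h : IsDoublingSpace X) :
    ∃ n : ℕ, SepBound n n X := by
  obtain ⟨N₀, hN₀⟩ := h
  set N := N₀ + 1 with hNdef
  have hN : ∀ x : X, ∀ r : ℝ, 0 < r → ∃ F : Finset X, F.card ≤ N ∧
      Metric.closedBall x r ⊆ ⋃ y ∈ F, Metric.closedBall y (r / 2) := by
    intro x r hr
    obtain ⟨F, h1, h2⟩ := hN₀ x r hr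
    exact ⟨F, h1.trans (Nat.le_succ _), h2⟩
  have hN1 : 1 ≤ N := Nat.succ_le_succ (Nat.zero_le _)
  refine ⟨N * 2 ^ N, sepBound_mono (C := N * 2 ^ N) (β := N) ?_ le_rfl
    (Nat.le_mul_of_pos_right N (by positivity))⟩
  intro A α d hα hsep hdiam hcard
  obtain ⟨x₀, hx₀, y₀, hy₀, hxy₀⟩ := Finset.one_lt_card.1 hcard
  have hαd : α ≤ d := (hsep x₀ hx₀ y₀ hy₀ hxy₀).trans (hdiam x₀ hx₀ y₀ hy₀)
  have hd : 0 < d := hα.trans_le hαd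
  -- choose minimal k with 2*d/α < 2^k
  have hex : ∃ k : ℕ, 2 * d / α < 2 ^ k := pow_unbounded_of_one_lt _ one_lt_two
  set k := Nat.find hex with hkdef
  have hk : 2 * d / α < 2 ^ k := Nat.find_spec hex
  have hk0 : k ≠ 0 := by
    intro h0
    have : 2 * d / α < 1 := by simpa [h0] using hk
    have : (2 : ℝ) ≤ 2 * d / α := by
      rw [le_div_iff₀ hα]; linarith
    linarith
  obtain ⟨m, hm⟩ : ∃ m, k = m + 1 := ⟨k - 1, (Nat.succ_pred_eq_of_pos (Nat.pos_of_ne_zero hk0)).symm⟩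
  have hmk : (2 : ℝ) ^ m ≤ 2 * d / α := by
    by_contra hcon
    push_neg at hcon
    exact Nat.find_min hex (by omega) hcon
  -- cover the ball of radius d around x₀ by N^k balls of radius d/2^k
  obtain ⟨F, hFc, hFs⟩ := cover_iter hN k x₀ d hd
  have hAsub : (A : Set X) ⊆ Metric.closedBall x₀ d := by
    intro a ha
    exact Metric.mem_closedBall.2 (hdiam a ha x₀ hx₀)
  have hsmall : 2 * (d / 2 ^ k) < α := by
    have h2k : (0 : ℝ) < 2 ^ k := by positivity
    have h2d : 2 * d < 2 ^ k * α := (div_lt_iff₀ hα).1 hk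
    have : 2 * (d / 2 ^ k) = 2 * d / 2 ^ k := by ring
    rw [this, div_lt_iff₀ h2k]
    linarith
  have hcard' : A.card ≤ F.card := card_le_of_sep hsep (hAsub.trans hFs) hsmall
  have hNk : (A.card : ℝ) ≤ (N : ℝ) ^ k := by
    calc (A.card : ℝ) ≤ (F.card : ℝ) := Nat.cast_le.2 hcard'
      _ ≤ ((N ^ k : ℕ) : ℝ) := Nat.cast_le.2 hFc
      _ = (N : ℝ) ^ k := by push_cast; ring
  -- N^k = N * N^m ≤ N * (2^m)^N ≤ N * (2d/α)^N
  have hNle : (N : ℝ) ≤ 2 ^ N := by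
    exact_mod_cast (Nat.lt_two_pow_self (n := N)).le
  have step1 : (N : ℝ) ^ k ≤ (N : ℝ) * ((2 : ℝ) ^ m) ^ N := by
    rw [hm, pow_succ, mul_comm]
    apply mul_le_mul_of_nonneg_left _ (by positivity)
    calc (N : ℝ) ^ m ≤ ((2 : ℝ) ^ N) ^ m :=
          pow_le_pow_left₀ (by positivity) hNle m
      _ = ((2 : ℝ) ^ m) ^ N := by rw [← pow_mul, ← pow_mul, Nat.mul_comm]
  have step2 : ((2 : ℝ) ^ m) ^ N ≤ (2 * d / α) ^ N :=
    pow_le_pow_left₀ (by positivity) hmk N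
  have final : (A.card : ℝ) ≤ (N : ℝ) * (2 * d / α) ^ N := by
    calc (A.card : ℝ) ≤ (N : ℝ) ^ k := hNk
      _ ≤ (N : ℝ) * ((2 : ℝ) ^ m) ^ N := step1
      _ ≤ (N : ℝ) * (2 * d / α) ^ N := by
          apply mul_le_mul_of_nonneg_left step2 (by positivity)
  calc (A.card : ℝ) ≤ (N : ℝ) * (2 * d / α) ^ N := final
    _ = ((N * 2 ^ N : ℕ) : ℝ) * (d / α) ^ N := by
        push_cast
        rw [mul_div_assoc, mul_pow]
        ring

/-- The finite-subset bound implies ball-doubling (in any metric space). -/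
lemma doubling_of_sepBound {X : Type*} [MetricSpace X] {n : ℕ} (h : SepBound n n X) :
    IsDoublingSpace X := by
  classical
  set M := n * 4 ^ n + 1 with hMdef
  refine ⟨M, fun x r hr => ?_⟩
  -- any (r/2)-separated subset of closedBall x r has card ≤ M
  have bound : ∀ A : Finset X, (∀ a ∈ A, a ∈ Metric.closedBall x r) →
      (∀ a ∈ A, ∀ b ∈ A, a ≠ b → r / 2 ≤ dist a b) → A.card ≤ M := by
    intro A hball hsep
    by_cases hcard : 2 ≤ A.card
    · have key : (A.card : ℝ) ≤ (n : ℝ) * (2 * r / (r / 2)) ^ n := by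
        apply h A (r / 2) (2 * r) (by positivity) hsep _ hcard
        intro a ha b hb
        have h1 : dist a x ≤ r := Metric.mem_closedBall.1 (hball a ha)
        have h2 : dist x b ≤ r := by
          rw [dist_comm]; exact Metric.mem_closedBall.1 (hball b hb)
        calc dist a b ≤ dist a x + dist x b := dist_triangle a x b
          _ ≤ 2 * r := by linarith
      have h4 : 2 * r / (r / 2) = 4 := by
        field_simp
        ring
      rw [h4] at key
      have : (A.card : ℝ) ≤ ((n * 4 ^ n : ℕ) : ℝ) := by
        calc (A.card : ℝ) ≤ (n : ℝ) * 4 ^ n := key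
          _ = ((n * 4 ^ n : ℕ) : ℝ) := by push_cast; ring
      have := Nat.cast_le.1 this
      omega
    · omega
  -- take a separated subset of maximal cardinality
  set s : Set ℕ := {k | ∃ A : Finset X, (∀ a ∈ A, a ∈ Metric.closedBall x r) ∧
      (∀ a ∈ A, ∀ b ∈ A, a ≠ b → r / 2 ≤ dist a b) ∧ A.card = k} with hsdef
  have hsne : s.Nonempty := by
    refine ⟨1, {x}, ?_, ?_, by simp⟩
    · intro a ha
      rw [Finset.mem_singleton] at ha
      subst ha
      exact Metric.mem_closedBall.2 (by simp [hr.le])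
    · intro a ha b hb hab
      rw [Finset.mem_singleton] at ha hb
      exact absurd (ha.trans hb.symm) hab
  have hub : ∀ k ∈ s, k ≤ M := by
    intro k hk
    obtain ⟨A, h1, h2, h3⟩ := hk
    exact h3 ▸ bound A h1 h2
  have hsbdd : BddAbove s := ⟨M, hub⟩
  obtain ⟨A, hA1, hA2, hA3⟩ := Nat.sSup_mem hsne hsbdd
  refine ⟨A, ?_, ?_⟩
  · exact bound A hA1 hA2
  · intro z hz
    by_contra hcon
    have hznot : ∀ y ∈ A, ¬ z ∈ Metric.closedBall y (r / 2) := by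
      intro y hy hmem
      exact hcon (Set.mem_iUnion₂.2 ⟨y, hy, hmem⟩)
    have hzA : z ∉ A := by
      intro hzA
      exact hznot z hzA (Metric.mem_closedBall.2 (by simp [le_of_lt (half_pos hr)]))
    have hmem : A.card + 1 ∈ s := by
      refine ⟨insert z A, ?_, ?_, ?_⟩
      · intro a ha
        rcases Finset.mem_insert.1 ha with rfl | ha
        · exact hz
        · exact hA1 a ha
      · intro a ha b hb hab
        rcases Finset.mem_insert.1 ha with rfl | ha' <;>
          rcases Finset.mem_insert.1 hb with rfl | hb'
        · exact absurd rfl hab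
        · have := hznot b hb'
          rw [Metric.mem_closedBall] at this
          push_neg at this
          exact this.le
        · have := hznot a ha'
          rw [Metric.mem_closedBall] at this
          push_neg at this
          rw [dist_comm]
          exact this.le
        · exact hA2 a ha' b hb' hab
      · rw [Finset.card_insert_of_notMem hzA]
    have : A.card + 1 ≤ sSup s := le_csSup hsbdd hmem
    omega

/-- Transferring points between GH-close spaces with small distance distortion. -/
lemma ghspace_transfer {X Y : Type*} [MetricSpace X] [CompactSpace X] [Nonempty X]
    [MetricSpace Y] [CompactSpace Y] [Nonempty Y] {ε : ℝ}
    (h : ghDist X Y < ε) :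
    ∃ f : X → Y, ∀ x x' : X, |dist (f x) (f x') - dist x x'| ≤ 2 * ε := by
  have hiso₁ : Isometry (optimalGHInjl X Y) := isometry_optimalGHInjl X Y
  have hiso₂ : Isometry (optimalGHInjr X Y) := isometry_optimalGHInjr X Y
  have hH : Metric.hausdorffDist (Set.range (optimalGHInjl X Y))
      (Set.range (optimalGHInjr X Y)) < ε := by
    rw [hausdorffDist_optimal]; exact h
  have hfin : EMetric.hausdorffEdist (Set.range (optimalGHInjl X Y))
      (Set.range (optimalGHInjr X Y)) ≠ ⊤ :=
    Metric.hausdorffEdist_ne_top_of_nonempty_of_bounded (Set.range_nonempty _)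
      (Set.range_nonempty _) (isCompact_range hiso₁.continuous).isBounded
      (isCompact_range hiso₂.continuous).isBounded
  have key : ∀ x : X, ∃ y : Y, dist (optimalGHInjl X Y x) (optimalGHInjr X Y y) < ε := by
    intro x
    obtain ⟨z, hz, hzd⟩ := Metric.exists_dist_lt_of_hausdorffDist_lt (Set.mem_range_self x) hH hfin
    obtain ⟨y, rfl⟩ := hz
    exact ⟨y, hzd⟩
  choose f hf using key
  refine ⟨f, fun x x' => ?_⟩
  have e1 : dist (f x) (f x') = dist (optimalGHInjr X Y (f x)) (optimalGHInjr X Y (f x')) :=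
    (hiso₂.dist_eq _ _).symm
  have e2 : dist x x' = dist (optimalGHInjl X Y x) (optimalGHInjl X Y x') :=
    (hiso₁.dist_eq _ _).symm
  rw [e1, e2]
  have hq := dist_dist_dist_le (optimalGHInjr X Y (f x)) (optimalGHInjr X Y (f x'))
    (optimalGHInjl X Y x) (optimalGHInjl X Y x')
  rw [Real.dist_eq] at hq
  have h1 := hf x
  have h2 := hf x'
  rw [dist_comm] at h1 h2
  linarith [hq, h1, h2]

/-- The finite-subset bound is a closed condition on the Gromov–Hausdorff space. -/
lemma isClosed_sepBound (n : ℕ) : IsClosed {p : GHSpace | SepBound n n p.Rep} := by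
  classical
  rw [← closure_subset_iff_isClosed]
  intro p hp
  rw [Metric.mem_closure_iff] at hp
  intro A α d hα hsep hdiam hcard
  -- for each small ε we get the perturbed bound
  have step : ∀ ε : ℝ, ε ∈ Set.Ioo (0 : ℝ) (α / 4) →
      (A.card : ℝ) ≤ (n : ℝ) * ((d + 2 * ε) / (α - 2 * ε)) ^ n := by
    intro ε ⟨hε0, hεα⟩
    obtain ⟨q, hq, hdq⟩ := hp ε hε0
    rw [dist_ghDist] at hdq
    obtain ⟨f, hf⟩ := ghspace_transfer hdq
    set B := A.image f with hBdef
    have hinj : Set.InjOn f (A : Set p.Rep) := by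
      intro a ha b hb hab
      by_contra hne
      have h1 : α ≤ dist a b := hsep a ha b hb hne
      have h2 := hf a b
      rw [hab, dist_self] at h2
      rw [abs_le] at h2
      linarith [h2.1]
    have hBcard : B.card = A.card := Finset.card_image_of_injOn hinj
    have hsep' : ∀ u ∈ B, ∀ v ∈ B, u ≠ v → α - 2 * ε ≤ dist u v := by
      intro u hu v hv huv
      obtain ⟨a, ha, rfl⟩ := Finset.mem_image.1 hu
      obtain ⟨b, hb, rfl⟩ := Finset.mem_image.1 hv
      have hab : a ≠ b := fun hh => huv (by rw [hh])
      have h1 : α ≤ dist a b := hsep a ha b hb hab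
      have h2 := hf a b
      rw [abs_le] at h2
      linarith [h2.1]
    have hdiam' : ∀ u ∈ B, ∀ v ∈ B, dist u v ≤ d + 2 * ε := by
      intro u hu v hv
      obtain ⟨a, ha, rfl⟩ := Finset.mem_image.1 hu
      obtain ⟨b, hb, rfl⟩ := Finset.mem_image.1 hv
      have h1 : dist a b ≤ d := hdiam a ha b hb
      have h2 := hf a b
      rw [abs_le] at h2
      linarith [h2.2]
    have := hq B (α - 2 * ε) (d + 2 * ε) (by linarith) hsep' hdiam' (by omega)
    rwa [hBcard] at this
  -- pass to the limit ε → 0⁺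
  have hcont : Filter.Tendsto (fun ε : ℝ => (n : ℝ) * ((d + 2 * ε) / (α - 2 * ε)) ^ n)
      (nhdsWithin 0 (Set.Ioi 0)) (nhds ((n : ℝ) * (d / α) ^ n)) := by
    have h1 : ContinuousAt (fun ε : ℝ => d + 2 * ε) 0 := by fun_prop
    have h2 : ContinuousAt (fun ε : ℝ => α - 2 * ε) 0 := by fun_prop
    have h3 : ContinuousAt (fun ε : ℝ => (n : ℝ) * ((d + 2 * ε) / (α - 2 * ε)) ^ n) 0 := by
      apply ContinuousAt.mul continuousAt_const
      apply ContinuousAt.pow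
      apply ContinuousAt.div h1 h2
      simpa using hα.ne'
    have := h3.tendsto
    simp only [mul_zero, add_zero, sub_zero] at this
    exact this.mono_left nhdsWithin_le_nhds
  have hev : ∀ᶠ ε in nhdsWithin (0 : ℝ) (Set.Ioi 0),
      (A.card : ℝ) ≤ (n : ℝ) * ((d + 2 * ε) / (α - 2 * ε)) ^ n := by
    filter_upwards [Ioo_mem_nhdsGT_of_mem
      (show (0:ℝ) ∈ Set.Ico (0:ℝ) (α / 4) from ⟨le_refl _, by positivity⟩)] with ε hε
    exact step ε hε
  exact ge_of_tendsto hcont hev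

/-- The set of (isometry classes of) doubling compact metric spaces is `F_σ`
in the Gromov–Hausdorff space. -/
theorem stmt_10 :
    ∃ f : ℕ → Set GHSpace, (∀ n, IsClosed (f n)) ∧
      {p : GHSpace | IsDoublingSpace p.Rep} = ⋃ n, f n := by
  refine ⟨fun n => {p : GHSpace | SepBound n n p.Rep}, fun n => isClosed_sepBound n, ?_⟩
  ext p
  simp only [Set.mem_setOf_eq, Set.mem_iUnion]
  constructor
  · intro h
    obtain ⟨n, hn⟩ := sepBound_of_doubling h
    exact ⟨n, hn⟩
  · rintro ⟨n, hn⟩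
    exact doubling_of_sepBound hn
end

section
/- The set of all isometry classes of uniformly disconnected compact metric spaces is an F_σ subset of the Gromov–Hausdorff space (𝓜, d_GH). More precisely, for each δ ∈ (0, 1), the set of δ-uniformly disconnected compact metric spaces is closed in (𝓜, d_GH), and the uniformly disconnected spaces are the union of these sets over rational δ ∈ (0, 1). -/
open GromovHausdorff

/-- A metric space is `δ`-uniformly disconnected: for every non-constant finite sequence
`z₀, …, z_N`, we have `δ * dist (z 0) (z N) ≤ max_i dist (z i) (z (i+1))`. -/
def IsUnifDisconnected (δ : ℝ) (X : Type*) [MetricSpace X] : Prop :=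
  ∀ N : ℕ, ∀ z : Fin (N + 1) → X, (∃ i j, z i ≠ z j) →
    δ * dist (z 0) (z (Fin.last N)) ≤ ⨆ i : Fin N, dist (z i.castSucc) (z i.succ)

lemma isUnifDisconnected_mono {δ' δ : ℝ} (h : δ' ≤ δ) {X : Type*} [MetricSpace X]
    (hX : IsUnifDisconnected δ X) : IsUnifDisconnected δ' X := fun N z hz =>
  le_trans (mul_le_mul_of_nonneg_right h dist_nonneg) (hX N z hz)

lemma isClosed_ud {δ : ℝ} (hδ0 : 0 < δ) (hδ1 : δ ≤ 1) :
    IsClosed {p : GHSpace | IsUnifDisconnected δ p.Rep} := by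
  rw [← isOpen_compl_iff, Metric.isOpen_iff]
  intro p hp
  simp only [Set.mem_compl_iff, Set.mem_setOf_eq, IsUnifDisconnected, not_forall, not_le] at hp
  obtain ⟨N, z, hnc, hlt⟩ := hp
  set M : ℝ := ⨆ i : Fin N, dist (z i.castSucc) (z i.succ) with hM
  set A : ℝ := δ * dist (z 0) (z (Fin.last N)) with hA
  have hM0 : 0 ≤ M := Real.iSup_nonneg fun i => dist_nonneg
  have hA0 : 0 < A := lt_of_le_of_lt hM0 hlt
  have hd0 : 0 < dist (z 0) (z (Fin.last N)) := by
    nlinarith [dist_nonneg (x := z 0) (y := z (Fin.last N))]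
  set ε : ℝ := min ((A - M) / 5) (dist (z 0) (z (Fin.last N)) / 3) with hε
  have hε0 : 0 < ε := lt_min (by linarith) (by linarith)
  refine ⟨ε, hε0, fun q hq => ?_⟩
  simp only [Set.mem_compl_iff, Set.mem_setOf_eq]
  intro hud
  rw [Metric.mem_ball, dist_comm, dist_ghDist p q, ← hausdorffDist_optimal] at hq
  set Φ := optimalGHInjl p.Rep q.Rep with hΦdef
  set Ψ := optimalGHInjr p.Rep q.Rep with hΨdef
  have hΦ : Isometry Φ := isometry_optimalGHInjl p.Rep q.Rep
  have hΨ : Isometry Ψ := isometry_optimalGHInjr p.Rep q.Rep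
  have hfin : EMetric.hausdorffEdist (Set.range Φ) (Set.range Ψ) ≠ ⊤ :=
    Metric.hausdorffEdist_ne_top_of_nonempty_of_bounded (Set.range_nonempty _)
      (Set.range_nonempty _) (isCompact_range hΦ.continuous).isBounded
      (isCompact_range hΨ.continuous).isBounded
  have key : ∀ i : Fin (N + 1), ∃ w : q.Rep, dist (Φ (z i)) (Ψ w) < ε := by
    intro i
    obtain ⟨y, hy, hdy⟩ :=
      Metric.exists_dist_lt_of_hausdorffDist_lt (Set.mem_range_self (z i)) hq hfin
    obtain ⟨w, rfl⟩ := hy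
    exact ⟨w, hdy⟩
  choose w hw using key
  have up : ∀ i j, dist (w i) (w j) ≤ dist (z i) (z j) + 2 * ε := by
    intro i j
    have := dist_triangle4 (Ψ (w i)) (Φ (z i)) (Φ (z j)) (Ψ (w j))
    rw [hΦ.dist_eq] at this
    calc dist (w i) (w j) = dist (Ψ (w i)) (Ψ (w j)) := (hΨ.dist_eq _ _).symm
      _ ≤ _ := this
      _ ≤ dist (z i) (z j) + 2 * ε := by
          have h1 : dist (Ψ (w i)) (Φ (z i)) < ε := by rw [dist_comm]; exact hw i
          have h2 := hw j
          linarith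
  have down : ∀ i j, dist (z i) (z j) ≤ dist (w i) (w j) + 2 * ε := by
    intro i j
    have := dist_triangle4 (Φ (z i)) (Ψ (w i)) (Ψ (w j)) (Φ (z j))
    rw [hΨ.dist_eq] at this
    calc dist (z i) (z j) = dist (Φ (z i)) (Φ (z j)) := (hΦ.dist_eq _ _).symm
      _ ≤ _ := this
      _ ≤ dist (w i) (w j) + 2 * ε := by
          have h1 := hw i
          have h2 : dist (Ψ (w j)) (Φ (z j)) < ε := by rw [dist_comm]; exact hw j
          rw [dist_comm (Ψ (w j)) (Φ (z j))] at this
          linarith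
  -- the w sequence is nonconstant
  have hdw : dist (z 0) (z (Fin.last N)) - 2 * ε ≤ dist (w 0) (w (Fin.last N)) := by
    have := down 0 (Fin.last N); linarith
  have hεd : ε ≤ dist (z 0) (z (Fin.last N)) / 3 := min_le_right _ _
  have hwpos : 0 < dist (w 0) (w (Fin.last N)) := by linarith
  have hwne : w 0 ≠ w (Fin.last N) := by
    intro h; rw [h, dist_self] at hwpos; exact lt_irrefl _ hwpos
  have hlem := hud N w ⟨0, Fin.last N, hwne⟩
  have hsup : (⨆ i : Fin N, dist (w i.castSucc) (w i.succ)) ≤ M + 2 * ε := by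
    apply Real.iSup_le _ (by linarith)
    intro i
    refine (up _ _).trans (add_le_add_left ?_ _)
    rw [hM]
    exact le_ciSup (Set.Finite.bddAbove (Set.finite_range
      (fun i : Fin N => dist (z i.castSucc) (z i.succ)))) i
  have hεAM : ε ≤ (A - M) / 5 := min_le_left _ _
  have hlhs : A - 2 * ε ≤ δ * dist (w 0) (w (Fin.last N)) := by
    have h1 : δ * (dist (z 0) (z (Fin.last N)) - 2 * ε) ≤ δ * dist (w 0) (w (Fin.last N)) :=
      mul_le_mul_of_nonneg_left hdw hδ0.le
    have h2 : 2 * ε * δ ≤ 2 * ε * 1 :=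
      mul_le_mul_of_nonneg_left hδ1 (by linarith)
    nlinarith
  linarith

theorem stmt_11 :
    (∀ δ ∈ Set.Ioo (0:ℝ) 1,
      IsClosed {p : GHSpace | IsUnifDisconnected δ p.Rep}) ∧
    {p : GHSpace | ∃ δ ∈ Set.Ioo (0:ℝ) 1, IsUnifDisconnected δ p.Rep} =
      ⋃ q : {q : ℚ // (q : ℝ) ∈ Set.Ioo (0:ℝ) 1},
        {p : GHSpace | IsUnifDisconnected (q : ℝ) p.Rep} := by
  constructor
  · intro δ hδ
    exact isClosed_ud hδ.1 hδ.2.le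
  · ext p
    simp only [Set.mem_setOf_eq, Set.mem_iUnion]
    constructor
    · rintro ⟨δ, ⟨hδ0, hδ1⟩, hud⟩
      obtain ⟨q, hq0, hqδ⟩ := exists_rat_btwn hδ0
      refine ⟨⟨q, by exact_mod_cast hq0, hqδ.trans hδ1⟩, ?_⟩
      exact isUnifDisconnected_mono hqδ.le hud
    · rintro ⟨⟨q, hq0, hq1⟩, h⟩
      exact ⟨(q : ℝ), ⟨hq0, hq1⟩, h⟩
end

section
/- For each δ ∈ (0, 1), the set of isometry classes of δ-uniformly disconnected compact metric spaces is closed in the Gromov–Hausdorff space (𝓜, d_GH): if a sequence of δ-uniformly disconnected compact metric spaces converges in the Gromov–Hausdorff distance to a compact metric space (X, d), then (X, d) is δ-uniformly disconnected. -/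
open GromovHausdorff

theorem stmt_12 (δ : ℝ) (hδ : δ ∈ Set.Ioo (0:ℝ) 1)
    (K : ℕ → GHSpace) (hK : ∀ n, IsUnifDisconnected δ (K n).Rep)
    (P : GHSpace) (hlim : Filter.Tendsto K Filter.atTop (nhds P)) :
    IsUnifDisconnected δ P.Rep := by
  obtain ⟨hδ0, hδ1⟩ := hδ
  intro N z hz
  obtain ⟨i0, j0, hij⟩ := hz
  have hN : 0 < N := by
    by_contra h
    push_neg at h
    have h1 := i0.isLt
    have h2 := j0.isLt
    exact hij (congrArg z (by rw [Fin.ext_iff]; omega))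
  haveI : Nonempty (Fin N) := ⟨⟨0, hN⟩⟩
  set m := dist (z i0) (z j0) with hm
  have hm0 : 0 < m := dist_pos.mpr hij
  have key : ∀ ε > (0:ℝ), δ * dist (z 0) (z (Fin.last N)) ≤
      (⨆ i : Fin N, dist (z i.castSucc) (z i.succ)) + ε := by
    intro ε hε
    set ε' := min (ε / 4) (m / 4) with hε'
    have hε'0 : 0 < ε' := lt_min (by linarith) (by linarith)
    obtain ⟨n, hn⟩ := (Metric.tendsto_atTop.mp hlim ε' hε'0).imp (fun n h => h n le_rfl)
    have hdist : Metric.hausdorffDist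
        (Set.range (optimalGHInjl (K n).Rep P.Rep)) (Set.range (optimalGHInjr (K n).Rep P.Rep)) < ε' := by
      rw [hausdorffDist_optimal, ← dist_ghDist]
      simpa [dist_comm] using hn
    have hne : EMetric.hausdorffEdist
        (Set.range (optimalGHInjr (K n).Rep P.Rep)) (Set.range (optimalGHInjl (K n).Rep P.Rep)) ≠ ⊤ := by
      apply Metric.hausdorffEdist_ne_top_of_nonempty_of_bounded
      · exact Set.range_nonempty _
      · exact Set.range_nonempty _
      · exact (isCompact_range (isometry_optimalGHInjr (K n).Rep P.Rep).continuous).isBounded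
      · exact (isCompact_range (isometry_optimalGHInjl (K n).Rep P.Rep).continuous).isBounded
    have hpick : ∀ i : Fin (N + 1), ∃ w : (K n).Rep,
        dist (optimalGHInjr (K n).Rep P.Rep (z i)) (optimalGHInjl (K n).Rep P.Rep w) < ε' := by
      intro i
      have hd : Metric.hausdorffDist
          (Set.range (optimalGHInjr (K n).Rep P.Rep)) (Set.range (optimalGHInjl (K n).Rep P.Rep)) < ε' := by
        rwa [Metric.hausdorffDist_comm]
      obtain ⟨y, hy, hdy⟩ := Metric.exists_dist_lt_of_hausdorffDist_lt
        (Set.mem_range_self (z i)) hd hne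
      obtain ⟨w, rfl⟩ := hy
      exact ⟨w, hdy⟩
    choose w hw using hpick
    have hIl := isometry_optimalGHInjl (K n).Rep P.Rep
    have hIr := isometry_optimalGHInjr (K n).Rep P.Rep
    -- key distance comparison
    have hcomp : ∀ a b : Fin (N + 1),
        dist (w a) (w b) ≤ dist (z a) (z b) + 2 * ε' ∧
        dist (z a) (z b) ≤ dist (w a) (w b) + 2 * ε' := by
      intro a b
      have h1 : dist (optimalGHInjl (K n).Rep P.Rep (w a)) (optimalGHInjl (K n).Rep P.Rep (w b)) ≤
          dist (optimalGHInjr (K n).Rep P.Rep (z a)) (optimalGHInjr (K n).Rep P.Rep (z b)) + 2 * ε' := by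
        have := dist_triangle4 (optimalGHInjl (K n).Rep P.Rep (w a)) (optimalGHInjr (K n).Rep P.Rep (z a))
          (optimalGHInjr (K n).Rep P.Rep (z b)) (optimalGHInjl (K n).Rep P.Rep (w b))
        have ha := hw a
        have hb := hw b
        rw [dist_comm] at ha
        linarith
      have h2 : dist (optimalGHInjr (K n).Rep P.Rep (z a)) (optimalGHInjr (K n).Rep P.Rep (z b)) ≤
          dist (optimalGHInjl (K n).Rep P.Rep (w a)) (optimalGHInjl (K n).Rep P.Rep (w b)) + 2 * ε' := by
        have := dist_triangle4 (optimalGHInjr (K n).Rep P.Rep (z a)) (optimalGHInjl (K n).Rep P.Rep (w a))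
          (optimalGHInjl (K n).Rep P.Rep (w b)) (optimalGHInjr (K n).Rep P.Rep (z b))
        have ha := hw a
        have hb := hw b
        rw [dist_comm] at hb
        linarith
      rw [hIl.dist_eq, hIr.dist_eq] at h1 h2
      exact ⟨h1, h2⟩
    have hwne : w i0 ≠ w j0 := by
      intro h
      have := (hcomp i0 j0).2
      rw [h, dist_self] at this
      have h2 : 2 * ε' ≤ m / 2 := by
        have : ε' ≤ m / 4 := min_le_right _ _
        linarith
      rw [← hm] at this
      linarith
    have hkey := hK n N w ⟨i0, j0, hwne⟩
    have hbdd : BddAbove (Set.range fun i : Fin N => dist (z i.castSucc) (z i.succ)) :=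
      Set.Finite.bddAbove (Set.finite_range _)
    have hsup : (⨆ i : Fin N, dist (w i.castSucc) (w i.succ)) ≤
        (⨆ i : Fin N, dist (z i.castSucc) (z i.succ)) + 2 * ε' := by
      apply ciSup_le
      intro i
      calc dist (w i.castSucc) (w i.succ) ≤ dist (z i.castSucc) (z i.succ) + 2 * ε' :=
            (hcomp _ _).1
        _ ≤ (⨆ i : Fin N, dist (z i.castSucc) (z i.succ)) + 2 * ε' := by
            gcongr
            exact le_ciSup hbdd i
    have hlhs : dist (z 0) (z (Fin.last N)) ≤ dist (w 0) (w (Fin.last N)) + 2 * ε' :=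
      (hcomp _ _).2
    have hε'4 : 4 * ε' ≤ ε := by
      have : ε' ≤ ε / 4 := min_le_left _ _
      linarith
    have : δ * dist (z 0) (z (Fin.last N)) ≤ δ * dist (w 0) (w (Fin.last N)) + 2 * ε' := by
      nlinarith [dist_nonneg (x := z 0) (y := z (Fin.last N))]
    linarith
  exact le_of_forall_pos_le_add key
end

section
/- For c ∈ (0, 1) and t ∈ (0, ∞), let S(c, t) be the set of isometry classes of compact metric spaces (X, d) such that for all x ∈ X and all r ∈ (0, t) there exists y ∈ X with c·r ≤ d(x, y) ≤ r. Then S(c, t) is closed in the Gromov–Hausdorff space (𝓜, d_GH). -/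
open GromovHausdorff Metric Set

theorem stmt_13 (c : ℝ) (hc : c ∈ Set.Ioo (0:ℝ) 1) (t : ℝ) (ht : 0 < t) :
    IsClosed {p : GHSpace | ∀ x : p.Rep, ∀ r : ℝ, 0 < r → r < t →
      ∃ y : p.Rep, c * r ≤ dist x y ∧ dist x y ≤ r} := by
  apply isClosed_of_closure_subset
  intro p hp x r hr0 hrt
  -- for each n, find an approximate point
  have key : ∀ n : ℕ, ∃ y : p.Rep,
      c * r - 2 / (n + 1) ≤ dist x y ∧ dist x y ≤ r + 2 / (n + 1) := by
    intro n
    have hn : (0:ℝ) < 1 / (n + 1) := by positivity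
    obtain ⟨q, hqS, hq⟩ := Metric.mem_closure_iff.1 hp _ hn
    set Φ := optimalGHInjl p.Rep q.Rep
    set Ψ := optimalGHInjr p.Rep q.Rep
    have hΦ : Isometry Φ := isometry_optimalGHInjl p.Rep q.Rep
    have hΨ : Isometry Ψ := isometry_optimalGHInjr p.Rep q.Rep
    have hHD : hausdorffDist (range Φ) (range Ψ) < 1 / (n + 1) := by
      rw [hausdorffDist_optimal, ← dist_ghDist]; exact hq
    have hfin : EMetric.hausdorffEdist (range Φ) (range Ψ) ≠ ⊤ :=
      hausdorffEdist_ne_top_of_nonempty_of_bounded (range_nonempty _) (range_nonempty _)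
        (isCompact_range hΦ.continuous).isBounded (isCompact_range hΨ.continuous).isBounded
    obtain ⟨x'', hx''mem, hx''⟩ :=
      exists_dist_lt_of_hausdorffDist_lt (mem_range_self (f := Φ) x) hHD hfin
    obtain ⟨x', rfl⟩ := hx''mem
    obtain ⟨y', hy'1, hy'2⟩ := hqS x' r hr0 hrt
    obtain ⟨y'', hy''mem, hy''⟩ :=
      exists_dist_lt_of_hausdorffDist_lt' (mem_range_self (f := Ψ) y') hHD hfin
    obtain ⟨y, rfl⟩ := hy''mem
    refine ⟨y, ?_, ?_⟩
    · have h1 : dist (Ψ x') (Ψ y') ≤ dist (Ψ x') (Φ x) + dist (Φ x) (Φ y) + dist (Φ y) (Ψ y') :=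
        dist_triangle4 _ _ _ _
      rw [hΨ.dist_eq, hΦ.dist_eq] at h1
      rw [dist_comm (Ψ x') (Φ x)] at h1
      have h2e : 2 / ((n:ℝ) + 1) = 1 / (n + 1) + 1 / (n + 1) := by ring
      linarith [hy'1, hx''.le, hy''.le]
    · have h2 : dist (Φ x) (Φ y) ≤ dist (Φ x) (Ψ x') + dist (Ψ x') (Ψ y') + dist (Ψ y') (Φ y) :=
        dist_triangle4 _ _ _ _
      rw [hΨ.dist_eq, hΦ.dist_eq] at h2
      rw [dist_comm (Ψ y') (Φ y)] at h2
      have h2e : 2 / ((n:ℝ) + 1) = 1 / (n + 1) + 1 / (n + 1) := by ring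
      linarith [hy'2, hx''.le, hy''.le]
  choose y hy1 hy2 using key
  obtain ⟨z, -, φ, hφmono, hφlim⟩ :=
    (isCompact_univ : IsCompact (Set.univ : Set p.Rep)).tendsto_subseq (fun n => mem_univ (y n))
  have hd : Filter.Tendsto (fun n => dist x (y (φ n))) Filter.atTop (nhds (dist x z)) :=
    (Continuous.tendsto (continuous_const.dist continuous_id) z).comp hφlim
  have hz : Filter.Tendsto (fun n : ℕ => 2 / ((φ n : ℝ) + 1)) Filter.atTop (nhds 0) := by
    have base : Filter.Tendsto (fun k : ℕ => 2 / ((k : ℝ) + 1)) Filter.atTop (nhds 0) := by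
      have := (tendsto_const_div_atTop_nhds_zero_nat (2:ℝ)).comp (Filter.tendsto_add_atTop_nat 1)
      refine this.congr fun k => ?_
      simp [Function.comp]
    exact base.comp hφmono.tendsto_atTop
  refine ⟨z, ?_, ?_⟩
  · have hl : Filter.Tendsto (fun n : ℕ => c * r - 2 / ((φ n : ℝ) + 1)) Filter.atTop
        (nhds (c * r)) := by simpa using tendsto_const_nhds.sub hz
    exact le_of_tendsto_of_tendsto hl hd
      (Filter.Eventually.of_forall fun n => hy1 (φ n))
  · have hl : Filter.Tendsto (fun n : ℕ => r + 2 / ((φ n : ℝ) + 1)) Filter.atTop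
        (nhds r) := by simpa using tendsto_const_nhds.add hz
    exact le_of_tendsto_of_tendsto hd hl
      (Filter.Eventually.of_forall fun n => hy2 (φ n))
end

section
/- The set of all isometry classes of uniformly perfect compact metric spaces is an F_σ subset of the Gromov–Hausdorff space (𝓜, d_GH). -/
open GromovHausdorff

/-- A metric space is uniformly perfect: for some `c ∈ (0,1)`, every point `x` and radius
`r ∈ (0, diam X)` admit `y` with `c * r ≤ dist x y ≤ r`. -/
def UnifPerfectSpace (X : Type*) [MetricSpace X] : Prop :=
  ∃ c ∈ Set.Ioo (0:ℝ) 1, ∀ x : X, ∀ r : ℝ,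
    0 < r → r < Metric.diam (Set.univ : Set X) →
      ∃ y : X, c * r ≤ dist x y ∧ dist x y ≤ r

open Metric Set

/-- Uniform statement with fixed constant. -/
def UPSet (c : ℝ) : Set GHSpace :=
  {p : GHSpace | ∀ x : p.Rep, ∀ r : ℝ,
    0 < r → r < Metric.diam (Set.univ : Set p.Rep) →
      ∃ y : p.Rep, c * r ≤ dist x y ∧ dist x y ≤ r}

lemma up_key {X Y : Type} [MetricSpace X] [CompactSpace X] [Nonempty X]
    [MetricSpace Y] [CompactSpace Y] [Nonempty Y]
    {c r δ : ℝ} (hc0 : 0 < c) (hc1 : c < 1)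
    (hY : ∀ x : Y, ∀ r : ℝ, 0 < r → r < Metric.diam (Set.univ : Set Y) →
      ∃ y : Y, c * r ≤ dist x y ∧ dist x y ≤ r)
    (hδ : ghDist X Y ≤ δ) (hδr : 8 * δ ≤ c * r)
    (x : X) (hr0 : 0 < r) (hrd : r < Metric.diam (Set.univ : Set X)) :
    ∃ y : X, (c / 2) * r ≤ dist x y ∧ dist x y ≤ r := by
  obtain ⟨Φ, Ψ, Φisom, Ψisom, hd_eq⟩ := ghDist_eq_hausdorffDist X Y
  set A := range Φ
  set B := range Ψ
  have hAc : IsCompact A := isCompact_range Φisom.continuous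
  have hBc : IsCompact B := isCompact_range Ψisom.continuous
  have hAne : A.Nonempty := range_nonempty _
  have hBne : B.Nonempty := range_nonempty _
  have hfin : EMetric.hausdorffEdist A B ≠ ⊤ :=
    hausdorffEdist_ne_top_of_nonempty_of_bounded hAne hBne hAc.isBounded hBc.isBounded
  have hd_le : hausdorffDist A B ≤ δ := by rw [← hd_eq]; exact hδ
  have hδ0 : 0 ≤ δ := le_trans (by unfold ghDist; exact dist_nonneg) hδ
  -- every point of A is within δ of B, and vice versa
  have hAB : ∀ a ∈ A, ∃ b ∈ B, dist a b ≤ δ := by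
    intro a ha
    obtain ⟨b, hb, hab⟩ := hBc.exists_infDist_eq_dist hBne a
    exact ⟨b, hb, by
      rw [← hab]; exact (infDist_le_hausdorffDist_of_mem ha hfin).trans hd_le⟩
  have hBA : ∀ b ∈ B, ∃ a ∈ A, dist b a ≤ δ := by
    intro b hb
    obtain ⟨a, ha, hba⟩ := hAc.exists_infDist_eq_dist hAne b
    refine ⟨a, ha, ?_⟩
    rw [← hba]
    have hfin' : EMetric.hausdorffEdist B A ≠ ⊤ := by
      change hausdorffEDist B A ≠ ⊤; rw [hausdorffEDist_comm]; exact hfin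
    have hd_le' : hausdorffDist B A ≤ δ := by rwa [hausdorffDist_comm]
    exact (infDist_le_hausdorffDist_of_mem hb hfin').trans hd_le'
  -- diameters
  have hdiamA : diam A = diam (univ : Set X) := Φisom.diam_range
  have hdiamB : diam B = diam (univ : Set Y) := Ψisom.diam_range
  have hdiam : diam (univ : Set X) ≤ diam (univ : Set Y) + 2 * δ := by
    rw [← hdiamA, ← hdiamB]
    rcases hAne with ⟨a0, ha0⟩
    apply diam_le_of_forall_dist_le (by positivity)
    intro a ha a' ha'
    obtain ⟨b, hb, hab⟩ := hAB a ha
    obtain ⟨b', hb', hab'⟩ := hAB a' ha'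
    calc dist a a' ≤ dist a b + dist b b' + dist b' a' := dist_triangle4 a b b' a'
      _ ≤ δ + diam B + δ := by
          gcongr
          · exact dist_le_diam_of_mem hBc.isBounded hb hb'
          · rw [dist_comm]; exact hab'
      _ = diam B + 2 * δ := by ring
  -- transfer x to Y
  obtain ⟨bx, hbx, hxbx⟩ := hAB (Φ x) ⟨x, rfl⟩
  obtain ⟨x', rfl⟩ := hbx
  have h2δr : 2 * δ < r := by nlinarith
  set r' : ℝ := r - 2 * δ with hr'
  have hr'0 : 0 < r' := by simp only [hr']; linarith
  have hr'd : r' < diam (univ : Set Y) := by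
    have := hrd
    simp only [hr']; linarith
  obtain ⟨y', hy'1, hy'2⟩ := hY x' r' hr'0 hr'd
  obtain ⟨ay, hay, hyay⟩ := hBA (Ψ y') ⟨y', rfl⟩
  obtain ⟨y, rfl⟩ := hay
  refine ⟨y, ?_, ?_⟩
  · have h1 : dist (Ψ x') (Ψ y') ≤ dist (Ψ x') (Φ x) + dist (Φ x) (Φ y) + dist (Φ y) (Ψ y') :=
      dist_triangle4 _ _ _ _
    have e1 : dist (Ψ x') (Ψ y') = dist x' y' := Ψisom.dist_eq _ _
    have e2 : dist (Φ x) (Φ y) = dist x y := Φisom.dist_eq _ _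
    have e3 : dist (Ψ x') (Φ x) ≤ δ := by rw [dist_comm]; exact hxbx
    have e4 : dist (Φ y) (Ψ y') ≤ δ := by rw [dist_comm]; exact hyay
    have : c * r' ≤ dist x y + 2 * δ := by
      rw [← e2]
      calc c * r' ≤ dist x' y' := hy'1
        _ = dist (Ψ x') (Ψ y') := e1.symm
        _ ≤ δ + dist (Φ x) (Φ y) + δ := by
            refine h1.trans ?_; gcongr
        _ = dist (Φ x) (Φ y) + 2 * δ := by ring
    have hcr' : c * r' = c * r - 2 * c * δ := by rw [hr']; ring
    nlinarith
  · have h1 : dist (Φ x) (Φ y) ≤ dist (Φ x) (Ψ x') + dist (Ψ x') (Ψ y') + dist (Ψ y') (Φ y) :=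
      dist_triangle4 _ _ _ _
    have e1 : dist (Ψ x') (Ψ y') = dist x' y' := Ψisom.dist_eq _ _
    have e2 : dist (Φ x) (Φ y) = dist x y := Φisom.dist_eq _ _
    rw [← e2]
    calc dist (Φ x) (Φ y) ≤ δ + dist x' y' + δ := by
          refine h1.trans ?_
          rw [e1]
          gcongr
      _ ≤ δ + r' + δ := by gcongr
      _ = r := by rw [hr']; ring

lemma closure_UPSet {c : ℝ} (hc0 : 0 < c) (hc1 : c < 1) :
    closure (UPSet c) ⊆ UPSet (c / 2) := by
  intro p hp x r hr0 hrd
  have hcr8 : 0 < c * r / 8 := by positivity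
  obtain ⟨q, hq, hdq⟩ := Metric.mem_closure_iff.1 hp _ hcr8
  have hgh : ghDist p.Rep q.Rep ≤ c * r / 8 := by
    rw [← dist_ghDist]; exact hdq.le
  exact up_key hc0 hc1 hq hgh (by linarith) x hr0 hrd

theorem stmt_14 :
    ∃ f : ℕ → Set GHSpace, (∀ n, IsClosed (f n)) ∧
      {p : GHSpace | UnifPerfectSpace p.Rep} = ⋃ n, f n := by
  refine ⟨fun n => closure (UPSet (1 / (n + 2))), fun n => isClosed_closure, ?_⟩
  ext p
  simp only [Set.mem_setOf_eq, Set.mem_iUnion]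
  constructor
  · rintro ⟨c, ⟨hc0, hc1⟩, hc⟩
    obtain ⟨n, hn⟩ := exists_nat_gt (1 / c)
    refine ⟨n, subset_closure ?_⟩
    intro x r hr0 hrd
    obtain ⟨y, hy1, hy2⟩ := hc x r hr0 hrd
    have hle : (1 : ℝ) / (n + 2) ≤ c := by
      rw [div_le_iff₀ (by positivity)]
      rw [div_lt_iff₀ hc0] at hn
      nlinarith
    exact ⟨y, le_trans (by nlinarith) hy1, hy2⟩
  · rintro ⟨n, hn⟩
    have h0 : (0 : ℝ) < 1 / (n + 2) := by positivity
    have h1 : (1 : ℝ) / (n + 2) < 1 := by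
      rw [div_lt_one (by positivity)]; linarith [Nat.cast_nonneg (α := ℝ) n]
    have := closure_UPSet h0 h1 hn
    exact ⟨1 / (n + 2) / 2, ⟨by positivity, by linarith⟩, this⟩
end

section
/- Let (X, d) and (Y, e) be compact metric spaces with d_GH((X, d), (Y, e)) > 0, and let R ⊆ X × Y be a correspondence (π_X(R) = X, π_Y(R) = Y) whose distortion satisfies dis(R) = 2·d_GH((X, d), (Y, e)). For s ∈ (0, 1), define the metric D_s on R by D_s((x, y), (u, v)) = (1−s)·d(x, u) + s·e(y, v). Then the map γ : [0, 1] → 𝓜 with γ(0) = (X, d), γ(1) = (Y, e), and γ(s) = (R, D_s) for s ∈ (0, 1) is a geodesic in the Gromov–Hausdorff space from (X, d) to (Y, e). -/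
open GromovHausdorff

theorem aux_ghdist_le {Z W : Type} (mZ : MetricSpace Z)
    (cZ : @CompactSpace Z mZ.toUniformSpace.toTopologicalSpace) (nZ : Nonempty Z)
    (mW : MetricSpace W) (cW : @CompactSpace W mW.toUniformSpace.toTopologicalSpace)
    (nW : Nonempty W) (f : Z → W) (hf : Function.Surjective f) (ε : ℝ)
    (H : ∀ z w : Z, |mZ.dist z w - mW.dist (f z) (f w)| ≤ 2 * ε) :
    dist (@toGHSpace Z mZ cZ nZ) (@toGHSpace W mW cW nW) ≤ ε := by
  letI := mZ; letI := mW
  haveI := cZ; haveI := cW; haveI := nZ; haveI := nW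
  have key : ghDist Z W ≤ 0 + (2 * ε) / 2 + 0 := by
    apply ghDist_le_of_approx_subsets (s := (Set.univ : Set Z)) (fun z => f z)
    · intro x; exact ⟨x, Set.mem_univ x, by simp⟩
    · intro w
      obtain ⟨z, hz⟩ := hf w
      exact ⟨⟨z, Set.mem_univ z⟩, by simp [hz]⟩
    · intro p q; exact H p.1 q.1
  have h : dist (toGHSpace Z) (toGHSpace W) = ghDist Z W := rfl
  rw [h]; linarith

theorem stmt_17 {X Y : Type} [MetricSpace X] [CompactSpace X] [Nonempty X]
    [MetricSpace Y] [CompactSpace Y] [Nonempty Y]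
    (hpos : 0 < ghDist X Y)
    (R : Set (X × Y))
    (hRX : ∀ x : X, ∃ y : Y, (x, y) ∈ R)
    (hRY : ∀ y : Y, ∃ x : X, (x, y) ∈ R)
    -- `R` is optimal: its distortion equals `2 * d_GH(X, Y)`
    (hdis : sSup {t : ℝ | ∃ p ∈ R, ∃ q ∈ R,
        t = |dist p.1 q.1 - dist p.2 q.2|} = 2 * ghDist X Y)
    -- the metrics `D_s` on `R`, for `s ∈ (0, 1)`
    (m : Set.Ioo (0:ℝ) 1 → MetricSpace R)
    (hm : ∀ s : Set.Ioo (0:ℝ) 1, ∀ p q : R,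
      (m s).dist p q = (1 - s.1) * dist p.1.1 q.1.1 + s.1 * dist p.1.2 q.1.2)
    (hcpt : ∀ s : Set.Ioo (0:ℝ) 1,
      @CompactSpace R (m s).toUniformSpace.toTopologicalSpace)
    (hne : Nonempty R)
    (γ : ℝ → GHSpace)
    (hγ0 : γ 0 = toGHSpace X)
    (hγ1 : γ 1 = toGHSpace Y)
    (hγ : ∀ s : ℝ, ∀ hs : s ∈ Set.Ioo (0:ℝ) 1,
      γ s = @toGHSpace R (m ⟨s, hs⟩) (hcpt ⟨s, hs⟩) hne) :
    ∀ s ∈ Set.Icc (0:ℝ) 1, ∀ t ∈ Set.Icc (0:ℝ) 1,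
      dist (γ s) (γ t) = |s - t| * ghDist X Y := by
  set D := ghDist X Y with hD
  -- distortion bound for all pairs in R
  have hK : ∀ p q : R, |dist p.1.1 q.1.1 - dist p.1.2 q.1.2| ≤ 2 * D := by
    intro p q
    rw [hD, ← hdis]
    apply le_csSup
    · refine ⟨Metric.diam (Set.univ : Set X) + Metric.diam (Set.univ : Set Y), ?_⟩
      rintro t ⟨a, ha, b, hb, rfl⟩
      have h1 : dist a.1 b.1 ≤ Metric.diam (Set.univ : Set X) :=
        Metric.dist_le_diam_of_mem isCompact_univ.isBounded (Set.mem_univ _) (Set.mem_univ _)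
      have h2 : dist a.2 b.2 ≤ Metric.diam (Set.univ : Set Y) :=
        Metric.dist_le_diam_of_mem isCompact_univ.isBounded (Set.mem_univ _) (Set.mem_univ _)
      have h3 : (0:ℝ) ≤ dist a.1 b.1 := dist_nonneg
      have h4 : (0:ℝ) ≤ dist a.2 b.2 := dist_nonneg
      rw [abs_sub_le_iff]; constructor <;> linarith
    · exact ⟨p.1, p.2, q.1, q.2, rfl⟩
  have hD0 : (0:ℝ) ≤ D := hpos.le
  have h01 : dist (γ 0) (γ 1) = D := by rw [hγ0, hγ1]; rfl
  -- trichotomy helper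
  have tri : ∀ c ∈ Set.Icc (0:ℝ) 1, c = 0 ∨ c ∈ Set.Ioo (0:ℝ) 1 ∨ c = 1 := by
    intro c hc
    rcases eq_or_lt_of_le hc.1 with h | h
    · exact Or.inl h.symm
    · rcases eq_or_lt_of_le hc.2 with h' | h'
      · exact Or.inr (Or.inr h')
      · exact Or.inr (Or.inl ⟨h, h'⟩)
  -- upper bound
  have hub : ∀ a ∈ Set.Icc (0:ℝ) 1, ∀ b ∈ Set.Icc (0:ℝ) 1, a ≤ b →
      dist (γ a) (γ b) ≤ (b - a) * D := by
    intro a ha b hb hab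
    rcases tri a ha with rfl | haI | rfl
    · rcases tri b hb with rfl | hbI | rfl
      · simp [hD0]
      · -- a = 0, b interior : compare X with (R, m b)
        rw [hγ0, hγ b hbI, dist_comm]
        have : (b - 0) * D = b * D := by ring
        rw [this]
        apply aux_ghdist_le (m ⟨b, hbI⟩) (hcpt ⟨b, hbI⟩) hne _ _ _ (fun z : R => z.1.1)
        · intro x
          obtain ⟨y, hy⟩ := hRX x
          exact ⟨⟨(x, y), hy⟩, rfl⟩
        · intro p q
          rw [hm ⟨b, hbI⟩ p q]
          have h1 := hK p q
          have e1 : (1 - b) * dist p.1.1 q.1.1 + b * dist p.1.2 q.1.2 - dist p.1.1 q.1.1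
              = -(b * (dist p.1.1 q.1.1 - dist p.1.2 q.1.2)) := by ring
          calc |(1 - b) * dist p.1.1 q.1.1 + b * dist p.1.2 q.1.2 - dist p.1.1 q.1.1|
              = b * |dist p.1.1 q.1.1 - dist p.1.2 q.1.2| := by
                rw [e1, abs_neg, abs_mul, abs_of_pos hbI.1]
            _ ≤ b * (2 * D) := mul_le_mul_of_nonneg_left h1 hbI.1.le
            _ = 2 * (b * D) := by ring
      · -- a = 0, b = 1
        rw [h01]; nlinarith
    · rcases tri b hb with rfl | hbI | rfl
      · linarith [haI.1]
      · -- both interior : identity map between (R, m a) and (R, m b)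
        rw [hγ a haI, hγ b hbI]
        apply aux_ghdist_le (m ⟨a, haI⟩) (hcpt ⟨a, haI⟩) hne (m ⟨b, hbI⟩) (hcpt ⟨b, hbI⟩) hne
          id Function.surjective_id
        intro p q
        simp only [id_eq]
        rw [hm ⟨a, haI⟩ p q, hm ⟨b, hbI⟩ p q]
        have h1 := hK p q
        have hba : (0:ℝ) ≤ b - a := by linarith
        have e1 : (1 - a) * dist p.1.1 q.1.1 + a * dist p.1.2 q.1.2
            - ((1 - b) * dist p.1.1 q.1.1 + b * dist p.1.2 q.1.2)
            = (b - a) * (dist p.1.1 q.1.1 - dist p.1.2 q.1.2) := by ring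
        calc |(1 - a) * dist p.1.1 q.1.1 + a * dist p.1.2 q.1.2
            - ((1 - b) * dist p.1.1 q.1.1 + b * dist p.1.2 q.1.2)|
            = (b - a) * |dist p.1.1 q.1.1 - dist p.1.2 q.1.2| := by
              rw [e1, abs_mul, abs_of_nonneg hba]
          _ ≤ (b - a) * (2 * D) := mul_le_mul_of_nonneg_left h1 hba
          _ = 2 * ((b - a) * D) := by ring
      · -- a interior, b = 1 : compare (R, m a) with Y
        rw [hγ a haI, hγ1]
        apply aux_ghdist_le (m ⟨a, haI⟩) (hcpt ⟨a, haI⟩) hne _ _ _ (fun z : R => z.1.2)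
        · intro y
          obtain ⟨x, hx⟩ := hRY y
          exact ⟨⟨(x, y), hx⟩, rfl⟩
        · intro p q
          rw [hm ⟨a, haI⟩ p q]
          have h1 := hK p q
          have ha1 : (0:ℝ) ≤ 1 - a := by linarith [haI.2]
          have e1 : (1 - a) * dist p.1.1 q.1.1 + a * dist p.1.2 q.1.2 - dist p.1.2 q.1.2
              = (1 - a) * (dist p.1.1 q.1.1 - dist p.1.2 q.1.2) := by ring
          calc |(1 - a) * dist p.1.1 q.1.1 + a * dist p.1.2 q.1.2 - dist p.1.2 q.1.2|
              = (1 - a) * |dist p.1.1 q.1.1 - dist p.1.2 q.1.2| := by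
                rw [e1, abs_mul, abs_of_nonneg ha1]
            _ ≤ (1 - a) * (2 * D) := mul_le_mul_of_nonneg_left h1 ha1
            _ = 2 * ((1 - a) * D) := by ring
    · -- a = 1 forces b = 1
      have : b = 1 := le_antisymm hb.2 hab
      subst this
      simp [hD0]
  have h0m : (0:ℝ) ∈ Set.Icc (0:ℝ) 1 := by constructor <;> norm_num
  have h1m : (1:ℝ) ∈ Set.Icc (0:ℝ) 1 := by constructor <;> norm_num
  -- lower bound
  have hlb : ∀ a ∈ Set.Icc (0:ℝ) 1, ∀ b ∈ Set.Icc (0:ℝ) 1, a ≤ b →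
      (b - a) * D ≤ dist (γ a) (γ b) := by
    intro a ha b hb hab
    have t1 : dist (γ 0) (γ 1) ≤ dist (γ 0) (γ a) + dist (γ a) (γ b) + dist (γ b) (γ 1) :=
      dist_triangle4 _ _ _ _
    have u1 := hub 0 h0m a ha ha.1
    have u2 := hub b hb 1 h1m hb.2
    rw [h01] at t1
    nlinarith
  intro s hs t ht
  rcases le_total s t with hst | hst
  · rw [abs_sub_comm, abs_of_nonneg (by linarith)]
    exact le_antisymm (hub s hs t ht hst) (hlb s hs t ht hst)
  · rw [dist_comm, abs_of_nonneg (by linarith)]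
    exact le_antisymm (hub t ht s hs hst) (hlb t ht s hs hst)
end
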